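/- arXiv:1811.12746 — 3 statements merged into one kernel-verified Lean document; each statement's English description precedes it below -/
import Mathlib

section
/- The Möbius transformation x ↦ (ax+b)(cx+d)^{-1} associated to a Vahlen matrix is compatible with matrix multiplication: if M₁, M₂ are Vahlen matrices and x ∈ R^{p,q} is such that all relevant denominators are invertible, then the Möbius transformation of M₁M₂ applied to x equals the composition of the Möbius transformations of M₁ and M₂ applied to x. -/
noncomputable section
open CliffordAlgebra

def sw (p q : ℕ) : Fin (p + q) → ℝ := fun i => if (i : ℕ) < p then 1 else -1

def Qpq (p q : ℕ) : QuadraticForm ℝ (Fin (p + q) → ℝ) :=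
  QuadraticMap.weightedSumSquares ℝ (sw p q)

def Bpq (p q : ℕ) (x y : Fin (p + q) → ℝ) : ℝ :=
  -∑ i, sw p q i * x i * y i

abbrev Cl (p q : ℕ) := CliffordAlgebra (Qpq p q)

def clConj {p q : ℕ} (x : Cl p q) : Cl p q := reverse (involute x)

def IsVec {p q : ℕ} (x : Cl p q) : Prop := ∃ v, x = ι (Qpq p q) v

def Tset (p q : ℕ) : Set (Cl p q) :=
  {x | ∃ l : List (Fin (p + q) → ℝ), x = (l.map (ι (Qpq p q))).prod}

def Gamma (p q : ℕ) : Set (Cl p q) :=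
  {x | ∃ l : List (Fin (p + q) → ℝ), (∀ v ∈ l, Bpq p q v v ≠ 0) ∧
        x = (l.map (ι (Qpq p q))).prod}

def Pin (p q : ℕ) : Set (Cl p q) :=
  {a | a ∈ Gamma p q ∧ (a * clConj a = 1 ∨ a * clConj a = -1)}

def mobius {p q : ℕ} (M : Matrix (Fin 2) (Fin 2) (Cl p q)) (x : Fin (p + q) → ℝ) : Cl p q :=
  (M 0 0 * ι (Qpq p q) x + M 0 1) * Ring.inverse (M 1 0 * ι (Qpq p q) x + M 1 1)

def IsVahlen {p q : ℕ} (M : Matrix (Fin 2) (Fin 2) (Cl p q)) : Prop :=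
  (∀ i j, M i j ∈ Tset p q ∨ M i j = 0) ∧
  (∃ r : ℝ, r ≠ 0 ∧
    M 0 0 * reverse (M 1 1) - M 0 1 * reverse (M 1 0) = algebraMap ℝ (Cl p q) r) ∧
  IsVec (reverse (M 0 0) * M 0 1) ∧ IsVec (reverse (M 1 0) * M 1 1) ∧
  IsVec (M 0 0 * reverse (M 1 0)) ∧ IsVec (M 0 1 * reverse (M 1 1))

theorem stmt7 (p q : ℕ) (M₁ M₂ : Matrix (Fin 2) (Fin 2) (Cl p q))
    (h₁ : IsVahlen M₁) (h₂ : IsVahlen M₂) (x z : Fin (p + q) → ℝ)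
    (hd₂ : IsUnit (M₂ 1 0 * ι (Qpq p q) x + M₂ 1 1))
    (hz : mobius M₂ x = ι (Qpq p q) z)
    (hd₁ : IsUnit (M₁ 1 0 * ι (Qpq p q) z + M₁ 1 1))
    (hd : IsUnit ((M₁ * M₂) 1 0 * ι (Qpq p q) x + (M₁ * M₂) 1 1)) :
    mobius (M₁ * M₂) x = mobius M₁ z := by
  obtain ⟨u, hu⟩ := hd₂
  obtain ⟨v, hv⟩ := hd₁
  have hnum : M₂ 0 0 * ι (Qpq p q) x + M₂ 0 1
      = ι (Qpq p q) z * (M₂ 1 0 * ι (Qpq p q) x + M₂ 1 1) := by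
    have := congrArg (· * (M₂ 1 0 * ι (Qpq p q) x + M₂ 1 1)) hz
    simpa [mobius, mul_assoc,
      Ring.inverse_mul_cancel _ (⟨u, hu⟩ : IsUnit (M₂ 1 0 * ι (Qpq p q) x + M₂ 1 1))]
      using this
  have hden : (M₁ * M₂) 1 0 * ι (Qpq p q) x + (M₁ * M₂) 1 1
      = (M₁ 1 0 * ι (Qpq p q) z + M₁ 1 1) * (M₂ 1 0 * ι (Qpq p q) x + M₂ 1 1) := by
    simp only [Matrix.mul_apply, Fin.sum_univ_two]
    calc (M₁ 1 0 * M₂ 0 0 + M₁ 1 1 * M₂ 1 0) * ι (Qpq p q) x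
          + (M₁ 1 0 * M₂ 0 1 + M₁ 1 1 * M₂ 1 1)
        = M₁ 1 0 * (M₂ 0 0 * ι (Qpq p q) x + M₂ 0 1)
          + M₁ 1 1 * (M₂ 1 0 * ι (Qpq p q) x + M₂ 1 1) := by noncomm_ring
      _ = _ := by rw [hnum]; noncomm_ring
  have hnum' : (M₁ * M₂) 0 0 * ι (Qpq p q) x + (M₁ * M₂) 0 1
      = (M₁ 0 0 * ι (Qpq p q) z + M₁ 0 1) * (M₂ 1 0 * ι (Qpq p q) x + M₂ 1 1) := by
    simp only [Matrix.mul_apply, Fin.sum_univ_two]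
    calc (M₁ 0 0 * M₂ 0 0 + M₁ 0 1 * M₂ 1 0) * ι (Qpq p q) x
          + (M₁ 0 0 * M₂ 0 1 + M₁ 0 1 * M₂ 1 1)
        = M₁ 0 0 * (M₂ 0 0 * ι (Qpq p q) x + M₂ 0 1)
          + M₁ 0 1 * (M₂ 1 0 * ι (Qpq p q) x + M₂ 1 1) := by noncomm_ring
      _ = _ := by rw [hnum]; noncomm_ring
  have hinv : Ring.inverse ((M₁ * M₂) 1 0 * ι (Qpq p q) x + (M₁ * M₂) 1 1)
      = (↑u⁻¹ : Cl p q) * ↑v⁻¹ := by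
    rw [hden, ← hu, ← hv, ← Units.val_mul, Ring.inverse_unit, mul_inv_rev, Units.val_mul]
  unfold mobius
  rw [hnum', hinv, ← hv, Ring.inverse_unit, ← hu]
  calc (M₁ 0 0 * ι (Qpq p q) z + M₁ 0 1) * ↑u * (↑u⁻¹ * ↑v⁻¹)
      = (M₁ 0 0 * ι (Qpq p q) z + M₁ 0 1) * (↑u * ↑u⁻¹) * ↑v⁻¹ := by noncomm_ring
    _ = (M₁ 0 0 * ι (Qpq p q) z + M₁ 0 1) * ↑v⁻¹ := by
        rw [Units.mul_inv, mul_one]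
end
end

section
/- The matrices of the form [[α,β],[β',α']] with α, β ∈ T(p,q), αβ* a vector in R^{p,q}, and α ᾱ − β β̄ = ±1, are closed under matrix multiplication and form a group S_{pq}. -/
/-!
Write `V(a, x) = [[a, a x], [(a x)', a']]`, `J = [[0, 1], [1, 0]]` and `N(a) = a ā`, a scalar for
`a ∈ T(p,q)`. If `α ᾱ - β β̄ = ±1`, one of `N(α)`, `N(β)` is nonzero, so that entry is invertible,
and `α β*` being a vector forces the other entry to be that one times a vector: every matrix of the
set is `V(a, x)` or `V(a, x) J` with `N(a) (1 + x²) = ±1`.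
Moving `x` past `b` by the twisted adjoint action (`x b' = b u`, `u² = x²`) gives
`V(a, x) V(b, y) = [[c (1 - u y), c (u + y)], ⋯]` with `c = a b`. Here `1 - u y` is a product of
at most four vectors, `(1 - u y) (u + y)` is a vector, and the determinant is
`N(c) (1 + u²) (1 + y²) = ±1`. As `J V(b, y) = V(b', -y) J` and `J² = 1`, this covers every
product. The inverse of `V(a, x)` is `σ [[ā, -x a*], ⋯]` with `σ = N(a) (1 + x²)`.
-/

noncomputable section
open CliffordAlgebra

def InS (p q : ℕ) (M : Matrix (Fin 2) (Fin 2) (Cl p q)) : Prop :=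
  ∃ α β : Cl p q, α ∈ Tset p q ∧ β ∈ Tset p q ∧ IsVec (α * reverse β) ∧
    (α * clConj α - β * clConj β = 1 ∨ α * clConj α - β * clConj β = -1) ∧
    M = !![α, β; involute β, involute α]

namespace CliffordAlgebra

section CommRing

variable {R M : Type*} [CommRing R] [AddCommGroup M] [Module R M] {Q : QuadraticForm R M}

variable (Q) in
/-- For `x = ι v₁ * ⋯ * ι vₙ` this is the scalar `x * star x`. -/
def listNorm (l : List M) : R := (l.map fun v => -Q v).prod

@[simp] lemma listNorm_nil : listNorm Q [] = 1 := rfl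

@[simp] lemma listNorm_cons (v : M) (l : List M) :
    listNorm Q (v :: l) = -Q v * listNorm Q l :=
  List.prod_cons

lemma listNorm_append (l k : List M) : listNorm Q (l ++ k) = listNorm Q l * listNorm Q k := by
  simp [listNorm]

lemma listNorm_reverse (l : List M) : listNorm Q l.reverse = listNorm Q l := by
  simp [listNorm, List.prod_reverse]

lemma listNorm_map_neg (l : List M) : listNorm Q (l.map Neg.neg) = listNorm Q l := by
  simp [listNorm, Function.comp_def]

lemma ι_mul_star_ι (v : M) : ι Q v * star (ι Q v) = algebraMap R _ (-Q v) := by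
  rw [star_ι, mul_neg, ι_sq_scalar, map_neg]

lemma mul_mul_star_mul_eq_algebraMap {c e : CliffordAlgebra Q} {r s : R}
    (hc : c * star c = algebraMap R _ r) (he : e * star e = algebraMap R _ s) :
    c * e * star (c * e) = algebraMap R _ (r * s) := by
  rw [star_mul, ← mul_assoc, mul_assoc c, he, ← Algebra.commutes, mul_assoc, hc, ← map_mul,
    mul_comm]

lemma prod_map_ι_mul_star (l : List M) :
    (l.map (ι Q)).prod * star (l.map (ι Q)).prod = algebraMap R _ (listNorm Q l) := by
  induction l with
  | nil => simp
  | cons v l ih =>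
    rw [List.map_cons, List.prod_cons, mul_mul_star_mul_eq_algebraMap (ι_mul_star_ι v) ih,
      listNorm_cons]

lemma star_mul_prod_map_ι (l : List M) :
    star (l.map (ι Q)).prod * (l.map (ι Q)).prod = algebraMap R _ (listNorm Q l) := by
  induction l with
  | nil => simp
  | cons v l ih =>
    rw [List.map_cons, List.prod_cons, star_mul, mul_assoc, ← mul_assoc (star (ι Q v)),
      star_ι, neg_mul, ι_sq_scalar, neg_mul, mul_neg, Algebra.left_comm, ih,
      ← map_mul, ← map_neg, listNorm_cons, neg_mul]

lemma prod_map_ι_mul_star_sub (l : List M) (x : M) :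
    (l.map (ι Q)).prod * star (l.map (ι Q)).prod
      - (l.map (ι Q)).prod * ι Q x * star ((l.map (ι Q)).prod * ι Q x)
      = algebraMap R _ (listNorm Q l * (1 + Q x)) := by
  rw [mul_mul_star_mul_eq_algebraMap (prod_map_ι_mul_star l) (ι_mul_star_ι x),
    prod_map_ι_mul_star, ← map_sub]
  ring_nf

lemma exists_reverse_mul_ι_mul_prod_map_ι (l : List M) (x : M) :
    ∃ y, reverse (l.map (ι Q)).prod * ι Q x * (l.map (ι Q)).prod = ι Q y := by
  induction l generalizing x with
  | nil => exact ⟨x, by simp⟩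
  | cons v l ih =>
    obtain ⟨y, hy⟩ := ih (QuadraticMap.polar Q v x • v - Q v • x)
    refine ⟨y, ?_⟩
    simp only [List.map_cons, List.prod_cons, reverse.map_mul, reverse_ι]
    rw [← hy, ← ι_mul_ι_mul_ι]
    noncomm_ring

lemma exists_prod_map_ι_mul_ι_mul_reverse (l : List M) (x : M) :
    ∃ y, (l.map (ι Q)).prod * ι Q x * reverse (l.map (ι Q)).prod = ι Q y := by
  simpa [reverse_prod_map_ι, reverse_reverse, ← List.map_reverse] using
    exists_reverse_mul_ι_mul_prod_map_ι (Q := Q) l.reverse x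

lemma involute_prod_map_ι_eq_prod_map_neg (l : List M) :
    involute (l.map (ι Q)).prod = ((l.map Neg.neg).map (ι Q)).prod := by
  simp [map_list_prod, Function.comp_def]

lemma exists_star_mul_ι_mul_involute (l : List M) (x : M) :
    ∃ y, star (l.map (ι Q)).prod * ι Q x * involute (l.map (ι Q)).prod = ι Q y := by
  simpa [star_def, involute_prod_map_ι_eq_prod_map_neg] using
    exists_reverse_mul_ι_mul_prod_map_ι (Q := Q) (l.map Neg.neg) x

lemma one_sub_ι_mul_ι_mul_ι_add (u y : M) :
    (1 - ι Q u * ι Q y) * ι Q (u + y)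
      = ι Q ((1 - QuadraticMap.polar Q u y - Q y) • u + (1 + Q u) • y) := by
  have hyy : ι Q u * ι Q y * ι Q y = Q y • ι Q u := by
    rw [mul_assoc, ι_sq_scalar, ← Algebra.commutes, Algebra.smul_def]
  rw [map_add, mul_add, sub_mul, sub_mul, one_mul, one_mul, ι_mul_ι_mul_ι, hyy]
  simp only [map_add, map_sub, map_smul]
  module

lemma one_sub_ι_mul_ι_mul_star (u y : M) :
    (1 - ι Q u * ι Q y) * star (1 - ι Q u * ι Q y)
      = algebraMap R _ (1 - QuadraticMap.polar Q u y + Q u * Q y) := by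
  have hswap : ι Q y * ι Q u = algebraMap R _ (QuadraticMap.polar Q u y) - ι Q u * ι Q y := by
    rw [ι_mul_ι_comm, QuadraticMap.polar_comm]
  have hsq : ι Q u * ι Q y * (ι Q y * ι Q u) = algebraMap R _ (Q u * Q y) := by
    rw [mul_assoc, ← mul_assoc (ι Q y), ι_sq_scalar, Algebra.left_comm, ι_sq_scalar, ← map_mul,
      mul_comm]
  rw [star_sub, star_one, star_mul, star_ι, star_ι, neg_mul_neg, mul_sub, sub_mul, sub_mul,
    one_mul, mul_one, one_mul, hsq, hswap, map_add, map_sub, map_one]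
  abel

lemma prod_map_ι_mul_one_sub_mul_star_sub (l : List M) (u y : M) :
    (l.map (ι Q)).prod * (1 - ι Q u * ι Q y) * star ((l.map (ι Q)).prod * (1 - ι Q u * ι Q y))
      - (l.map (ι Q)).prod * ι Q (u + y) * star ((l.map (ι Q)).prod * ι Q (u + y))
      = algebraMap R _ (listNorm Q l * ((1 + Q u) * (1 + Q y))) := by
  rw [mul_mul_star_mul_eq_algebraMap (prod_map_ι_mul_star l) (one_sub_ι_mul_ι_mul_star u y),
    mul_mul_star_mul_eq_algebraMap (prod_map_ι_mul_star l) (ι_mul_star_ι _), ← map_sub]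
  simp only [QuadraticMap.polar]
  ring_nf

def vahlenMatrix (α β : CliffordAlgebra Q) : Matrix (Fin 2) (Fin 2) (CliffordAlgebra Q) :=
  !![α, β; involute β, involute α]

lemma vahlenMatrix_mul (α β γ δ : CliffordAlgebra Q) :
    vahlenMatrix α β * vahlenMatrix γ δ
      = vahlenMatrix (α * γ + β * involute δ) (α * δ + β * involute γ) := by
  simp only [vahlenMatrix, Matrix.mul_fin_two, map_add, map_mul, involute_involute]
  rw [add_comm (involute β * γ), add_comm (involute β * δ)]

lemma vahlenMatrix_one_zero : vahlenMatrix (1 : CliffordAlgebra Q) 0 = 1 := by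
  rw [vahlenMatrix, map_zero, map_one, Matrix.one_fin_two]

lemma vahlenMatrix_mul_swap (α β : CliffordAlgebra Q) :
    vahlenMatrix α β * vahlenMatrix 0 1 = vahlenMatrix β α := by
  simp [vahlenMatrix_mul]

lemma swap_mul_swap : vahlenMatrix (0 : CliffordAlgebra Q) 1 * vahlenMatrix 0 1 = 1 := by
  rw [vahlenMatrix_mul_swap, vahlenMatrix_one_zero]

lemma swap_mul_vahlenMatrix_prod_map_ι (l : List M) (y : M) :
    vahlenMatrix 0 1 * vahlenMatrix (l.map (ι Q)).prod ((l.map (ι Q)).prod * ι Q y)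
      = vahlenMatrix ((l.map Neg.neg).map (ι Q)).prod
          (((l.map Neg.neg).map (ι Q)).prod * ι Q (-y)) * vahlenMatrix 0 1 := by
  simp [vahlenMatrix_mul, involute_prod_map_ι_eq_prod_map_neg]

lemma vahlenMatrix_mul_vahlenMatrix_of_twist {a b : CliffordAlgebra Q} {x y u : M}
    (h : ι Q x * involute b = b * ι Q u) :
    vahlenMatrix a (a * ι Q x) * vahlenMatrix b (b * ι Q y)
      = vahlenMatrix (a * b * (1 - ι Q u * ι Q y)) (a * b * ι Q (u + y)) := by
  have h' (z : CliffordAlgebra Q) : ι Q x * (involute b * z) = b * (ι Q u * z) := by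
    rw [← mul_assoc, h, mul_assoc]
  rw [vahlenMatrix_mul, map_mul, involute_ι]
  simp only [mul_assoc, mul_neg, h', h, map_add, mul_sub, mul_one, mul_add]
  congr 1 <;> abel

lemma involute_star (a : CliffordAlgebra Q) : involute (star a) = reverse a := by
  rw [star_def', involute_involute]

lemma vahlenMatrix_mul_vahlenMatrix_smul_star {a : CliffordAlgebra Q} {n : R}
    (ha : a * star a = algebraMap R _ n) (x : M) (r : R) :
    vahlenMatrix a (a * ι Q x) * vahlenMatrix (r • star a) (-r • (ι Q x * reverse a))
      = vahlenMatrix (algebraMap R _ (r * (n * (1 + Q x)))) 0 := by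
  have hx : a * ι Q x * (ι Q x * star a) = algebraMap R _ (Q x * n) := by
    rw [mul_assoc, ← mul_assoc (ι Q x), ι_sq_scalar, Algebra.left_comm, ha, ← map_mul]
  simp only [vahlenMatrix_mul, map_smul, map_neg, map_mul, involute_ι, ← star_def', involute_star,
    mul_smul_comm, neg_mul, neg_neg, smul_neg, mul_neg, neg_smul, ha, hx, ← mul_assoc]
  congr 1
  · simp only [Algebra.smul_def, ← map_mul, ← map_add]
    ring_nf
  · abel

lemma vahlenMatrix_smul_star_mul_vahlenMatrix {a : CliffordAlgebra Q} {n : R}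
    (ha : star a * a = algebraMap R _ n) (x : M) (r : R) :
    vahlenMatrix (r • star a) (-r • (ι Q x * reverse a)) * vahlenMatrix a (a * ι Q x)
      = vahlenMatrix (algebraMap R _ (r * (n * (1 + Q x)))) 0 := by
  have ha' : reverse a * involute a = algebraMap R _ n := by
    simpa [star_def, reverse.map_mul, reverse_reverse] using congrArg reverse ha
  have hx : ι Q x * reverse a * involute a = algebraMap R _ n * ι Q x := by
    rw [mul_assoc, ha', Algebra.commutes]
  simp only [vahlenMatrix_mul, map_mul, involute_ι, smul_mul_assoc, neg_mul, mul_neg, neg_neg,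
    neg_smul, ha, ← mul_assoc, hx]
  congr 1
  · rw [mul_assoc, ι_sq_scalar]
    simp only [Algebra.smul_def, ← map_mul, ← map_add]
    ring_nf
  · abel

lemma smul_star_prod_map_ι_mul_star_sub (l : List M) (x : M) (r : R) :
    r • star (l.map (ι Q)).prod * star (r • star (l.map (ι Q)).prod)
      - -r • (ι Q x * reverse (l.map (ι Q)).prod)
        * star (-r • (ι Q x * reverse (l.map (ι Q)).prod))
      = algebraMap R _ (r * r * (listNorm Q l * (1 + Q x))) := by
  have hrev : reverse (l.map (ι Q)).prod * star (reverse (l.map (ι Q)).prod)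
      = algebraMap R _ (listNorm Q l) := by
    rw [reverse_prod_map_ι, ← List.map_reverse, prod_map_ι_mul_star, listNorm_reverse]
  have hstar : star (l.map (ι Q)).prod * star (star (l.map (ι Q)).prod)
      = algebraMap R _ (listNorm Q l) := by
    rw [star_star, star_mul_prod_map_ι]
  have hscalar (s : R) : algebraMap R _ s * star (algebraMap R (CliffordAlgebra Q) s)
      = algebraMap R _ (s * s) := by
    rw [star_algebraMap, ← map_mul]
  rw [Algebra.smul_def, Algebra.smul_def, mul_mul_star_mul_eq_algebraMap (hscalar r) hstar,
    mul_mul_star_mul_eq_algebraMap (hscalar (-r))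
      (mul_mul_star_mul_eq_algebraMap (ι_mul_star_ι x) hrev), ← map_sub]
  ring_nf

end CommRing

section Field

variable {K M : Type*} [Field K] [AddCommGroup M] [Module K M] {Q : QuadraticForm K M}

/-- `u` is the image of `x` under the twisted adjoint action of `(l.map (ι Q)).prod`. -/
lemma exists_ι_mul_involute_eq_mul_ι [Invertible (2 : K)] {l : List M} (hl : listNorm Q l ≠ 0)
    (x : M) : ∃ u, ι Q x * involute (l.map (ι Q)).prod = (l.map (ι Q)).prod * ι Q u ∧
      Q u = Q x := by
  obtain ⟨y, hy⟩ := exists_star_mul_ι_mul_involute (Q := Q) l x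
  have hu : (l.map (ι Q)).prod * ι Q ((listNorm Q l)⁻¹ • y)
      = ι Q x * involute (l.map (ι Q)).prod := by
    rw [map_smul, ← hy, mul_smul_comm, ← mul_assoc, ← mul_assoc, prod_map_ι_mul_star,
      ← Algebra.smul_def, smul_mul_assoc, smul_smul, inv_mul_cancel₀ hl, one_smul]
  refine ⟨_, hu.symm, ?_⟩
  have hnorm := congrArg (fun z => z * star z) hu
  rw [involute_prod_map_ι_eq_prod_map_neg] at hnorm
  simp only [mul_mul_star_mul_eq_algebraMap (prod_map_ι_mul_star _) (ι_mul_star_ι _),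
    mul_mul_star_mul_eq_algebraMap (ι_mul_star_ι _) (prod_map_ι_mul_star _),
    listNorm_map_neg] at hnorm
  have h := (algebraMap K (CliffordAlgebra Q)).injective hnorm
  rwa [mul_comm (-Q x), mul_right_inj' hl, neg_inj] at h

lemma exists_eq_prod_map_ι_mul_ι {l : List M} (hl : listNorm Q l ≠ 0) {b : CliffordAlgebra Q}
    {w : M} (h : (l.map (ι Q)).prod * reverse b = ι Q w) :
    ∃ x, b = (l.map (ι Q)).prod * ι Q x := by
  set a := (l.map (ι Q)).prod
  have hrev : reverse b = (listNorm Q l)⁻¹ • (star a * ι Q w) := by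
    rw [← h, ← mul_assoc, star_mul_prod_map_ι, ← Algebra.smul_def, smul_smul,
      inv_mul_cancel₀ hl, one_smul]
  have hb : b = (listNorm Q l)⁻¹ • (ι Q w * involute a) := by
    rw [← reverse_reverse b, hrev, map_smul, reverse.map_mul, reverse_ι, star_def,
      reverse_reverse]
  obtain ⟨y, hy⟩ := exists_star_mul_ι_mul_involute (Q := Q) l w
  have hstar : star a * b = ι Q ((listNorm Q l)⁻¹ • y) := by
    rw [hb, mul_smul_comm, ← mul_assoc, hy, map_smul]
  refine ⟨(listNorm Q l)⁻¹ • (listNorm Q l)⁻¹ • y, ?_⟩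
  rw [map_smul, ← hstar, mul_smul_comm, ← mul_assoc, prod_map_ι_mul_star, ← Algebra.smul_def,
    smul_smul, inv_mul_cancel₀ hl, one_smul]

lemma one_sub_ι_mul_ι_of_ne_zero {u : M} (hu : Q u ≠ 0) (v : M) :
    1 - ι Q u * ι Q v = ι Q u * ι Q ((Q u)⁻¹ • u - v) := by
  rw [map_sub, mul_sub, map_smul, mul_smul_comm, ι_sq_scalar, Algebra.smul_def,
    ← map_mul (algebraMap K _), inv_mul_cancel₀ hu, map_one]

lemma one_sub_ι_mul_ι_of_polar_ne_zero {u v : M} (hu : Q u = 0)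
    (huv : QuadraticMap.polar Q u v ≠ 0) :
    1 - ι Q u * ι Q v = ι Q (((1 - Q v) / QuadraticMap.polar Q u v - 1) • u + v)
      * ι Q (((1 - Q v) / QuadraticMap.polar Q u v) • u + v) := by
  set β := (1 - Q v) / QuadraticMap.polar Q u v
  have hβ : β * QuadraticMap.polar Q u v + Q v = 1 := by
    rw [div_mul_cancel₀ _ huv, sub_add_cancel]
  have hvu : ι Q v * ι Q u = algebraMap K _ (QuadraticMap.polar Q u v) - ι Q u * ι Q v := by
    rw [ι_mul_ι_comm, QuadraticMap.polar_comm]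
  simp only [map_add, map_smul, add_mul, mul_add, smul_mul_assoc, mul_smul_comm,
    ι_sq_scalar, hu, hvu, Algebra.algebraMap_eq_smul_one]
  linear_combination (norm := module) -hβ • (1 : CliffordAlgebra Q)

lemma one_sub_ι_mul_ι_of_polar_eq_two {u w : M} (hu : Q u = 0)
    (huw : QuadraticMap.polar Q u w = 2) (v : M) :
    1 - ι Q u * ι Q v = (1 - ι Q u * ι Q w) * (1 - ι Q u * ι Q (w - v)) := by
  have huwu : ι Q u * ι Q w * ι Q u = ι Q u + ι Q u := by
    rw [ι_mul_ι_mul_ι, huw, hu, zero_smul, sub_zero, two_smul, map_add]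
  calc 1 - ι Q u * ι Q v
      = (1 - ι Q u * ι Q w) * (1 - ι Q u * ι Q (w - v))
        - (ι Q u * ι Q w * ι Q u - (ι Q u + ι Q u)) * ι Q (w - v) := by
        rw [map_sub]; noncomm_ring
    _ = (1 - ι Q u * ι Q w) * (1 - ι Q u * ι Q (w - v)) := by
        rw [huwu, sub_self, zero_mul, sub_zero]

/-- When `u` is isotropic and orthogonal to `v`, `1 - u v` is in general not a product of two
vectors; it is then split into two factors of the previous kind. -/
lemma exists_one_sub_ι_mul_ι_eq_prod [NeZero (2 : K)]
    (hQ : (QuadraticMap.polarBilin Q).SeparatingLeft) (u v : M) :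
    ∃ l : List M, 1 - ι Q u * ι Q v = (l.map (ι Q)).prod := by
  rcases ne_or_eq (Q u) 0 with hu | hu
  · exact ⟨[u, (Q u)⁻¹ • u - v], by simp [one_sub_ι_mul_ι_of_ne_zero hu v]⟩
  have of_polar_ne_zero : ∀ v, QuadraticMap.polar Q u v ≠ 0 →
      ∃ l : List M, 1 - ι Q u * ι Q v = (l.map (ι Q)).prod := fun v h =>
    ⟨[((1 - Q v) / QuadraticMap.polar Q u v - 1) • u + v,
      ((1 - Q v) / QuadraticMap.polar Q u v) • u + v],
      by rw [one_sub_ι_mul_ι_of_polar_ne_zero hu h]; simp⟩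
  rcases ne_or_eq (QuadraticMap.polar Q u v) 0 with huv | huv
  · exact of_polar_ne_zero v huv
  rcases eq_or_ne u 0 with rfl | hu0
  · exact ⟨[], by simp⟩
  obtain ⟨w, hw⟩ : ∃ w, QuadraticMap.polar Q u w ≠ 0 := by
    by_contra! h
    exact hu0 (hQ u h)
  set w' := (2 / QuadraticMap.polar Q u w) • w
  have hw' : QuadraticMap.polar Q u w' = 2 := by
    rw [QuadraticMap.polar_smul_right, smul_eq_mul, div_mul_cancel₀ _ hw]
  obtain ⟨l₁, h₁⟩ := of_polar_ne_zero w' (by rw [hw']; exact two_ne_zero)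
  obtain ⟨l₂, h₂⟩ := of_polar_ne_zero (w' - v)
    (by rw [QuadraticMap.polar_sub_right, hw', huv, sub_zero]; exact two_ne_zero)
  exact ⟨l₁ ++ l₂, by
    rw [one_sub_ι_mul_ι_of_polar_eq_two hu hw', h₁, h₂, List.map_append, List.prod_append]⟩

end Field

end CliffordAlgebra

section Signature

variable {p q : ℕ}

lemma polar_Qpq (u v : Fin (p + q) → ℝ) :
    QuadraticMap.polar (Qpq p q) u v = 2 * ∑ i, sw p q i * u i * v i := by
  simp only [QuadraticMap.polar, Qpq, QuadraticMap.weightedSumSquares_apply, Pi.add_apply,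
    smul_eq_mul, ← Finset.sum_sub_distrib, Finset.mul_sum]
  exact Finset.sum_congr rfl fun i _ => by ring

lemma separatingLeft_polarBilin_Qpq : (QuadraticMap.polarBilin (Qpq p q)).SeparatingLeft := by
  intro u hu
  funext i
  rw [Pi.zero_apply]
  have h := hu (Pi.single i 1)
  rw [QuadraticMap.polarBilin_apply_apply, polar_Qpq] at h
  simp only [Pi.single_apply, mul_ite, mul_one, mul_zero, Finset.sum_ite_eq', Finset.mem_univ,
    if_true, sw] at h
  split_ifs at h <;> linarith

lemma prod_mem_Tset (l : List (Fin (p + q) → ℝ)) : (l.map (ι (Qpq p q))).prod ∈ Tset p q :=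
  ⟨l, rfl⟩

lemma mul_mem_Tset {x y : Cl p q} (hx : x ∈ Tset p q) (hy : y ∈ Tset p q) : x * y ∈ Tset p q := by
  obtain ⟨l, rfl⟩ := hx
  obtain ⟨k, rfl⟩ := hy
  exact ⟨l ++ k, by simp⟩

lemma smul_prod_mem_Tset (r : ℝ) {l : List (Fin (p + q) → ℝ)} (hl : l ≠ []) :
    r • (l.map (ι (Qpq p q))).prod ∈ Tset p q := by
  obtain ⟨v, l, rfl⟩ := List.exists_cons_of_ne_nil hl
  exact ⟨(r • v) :: l, by simp⟩

lemma smul_mem_Tset_of_ne_zero {v : Fin (p + q) → ℝ} (hv : Qpq p q v ≠ 0) (r : ℝ) {x : Cl p q}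
    (hx : x ∈ Tset p q) : r • x ∈ Tset p q := by
  have hr : ι (Qpq p q) v * ι (Qpq p q) ((r / Qpq p q v) • v) = algebraMap ℝ _ r := by
    rw [map_smul, mul_smul_comm, ι_sq_scalar, Algebra.smul_def, ← map_mul, div_mul_cancel₀ _ hv]
  rw [Algebra.smul_def, ← hr]
  exact mul_mem_Tset ⟨[v, (r / Qpq p q v) • v], by simp only [List.map_cons, List.map_nil,
    List.prod_cons, List.prod_nil, mul_one]⟩ hx

lemma one_sub_ι_mul_ι_mem_Tset (u v : Fin (p + q) → ℝ) :
    1 - ι (Qpq p q) u * ι (Qpq p q) v ∈ Tset p q :=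
  exists_one_sub_ι_mul_ι_eq_prod separatingLeft_polarBilin_Qpq u v

end Signature

lemma algebraMap_eq_one_or_eq_neg_one_iff {A : Type*} [Ring A] [Algebra ℝ A] [Nontrivial A]
    {r : ℝ} : (algebraMap ℝ A r = 1 ∨ algebraMap ℝ A r = -1) ↔ |r| = 1 := by
  rw [abs_eq zero_le_one, ← map_one (algebraMap ℝ A), ← map_neg,
    (algebraMap ℝ A).injective.eq_iff, (algebraMap ℝ A).injective.eq_iff]

section InS

variable {p q : ℕ}

/-- `clConj` is, definitionally, Mathlib's `star` on `CliffordAlgebra`. -/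
lemma inS_iff {M : Matrix (Fin 2) (Fin 2) (Cl p q)} :
    InS p q M ↔ ∃ α β : Cl p q, α ∈ Tset p q ∧ β ∈ Tset p q ∧ IsVec (α * reverse β) ∧
      (α * star α - β * star β = 1 ∨ α * star α - β * star β = -1) ∧ M = vahlenMatrix α β :=
  Iff.rfl

lemma InS.mul_swap {M : Matrix (Fin 2) (Fin 2) (Cl p q)} (h : InS p q M) :
    InS p q (M * vahlenMatrix 0 1) := by
  obtain ⟨α, β, hα, hβ, ⟨w, hw⟩, hdet, rfl⟩ := inS_iff.mp h
  refine inS_iff.mpr ⟨β, α, hβ, hα, ⟨w, ?_⟩, ?_, vahlenMatrix_mul_swap α β⟩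
  · rw [← reverse_ι, ← hw, reverse.map_mul, reverse_reverse]
  · rw [← neg_sub]
    rcases hdet with h | h <;> simp [h]

lemma inS_one : InS p q 1 :=
  inS_iff.mpr ⟨1, 0, ⟨[], rfl⟩, ⟨[0], by simp⟩, ⟨0, by simp⟩, Or.inl (by simp),
    vahlenMatrix_one_zero.symm⟩

lemma inS_swap : InS p q (vahlenMatrix 0 1) := by
  simpa using (inS_one (p := p) (q := q)).mul_swap

lemma inS_vahlenMatrix_prod_mul_one_sub (l : List (Fin (p + q) → ℝ)) (u y : Fin (p + q) → ℝ)
    (h : |listNorm (Qpq p q) l * ((1 + Qpq p q u) * (1 + Qpq p q y))| = 1) :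
    InS p q (vahlenMatrix ((l.map (ι (Qpq p q))).prod * (1 - ι (Qpq p q) u * ι (Qpq p q) y))
      ((l.map (ι (Qpq p q))).prod * ι (Qpq p q) (u + y))) := by
  obtain ⟨w, hw⟩ := exists_prod_map_ι_mul_ι_mul_reverse (Q := Qpq p q) l
    ((1 - QuadraticMap.polar (Qpq p q) u y - Qpq p q y) • u + (1 + Qpq p q u) • y)
  refine inS_iff.mpr ⟨_, _, mul_mem_Tset (prod_mem_Tset l) (one_sub_ι_mul_ι_mem_Tset u y),
    mul_mem_Tset (prod_mem_Tset l) ⟨[u + y], by simp⟩, ⟨w, ?_⟩, ?_, rfl⟩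
  · rw [← hw, ← one_sub_ι_mul_ι_mul_ι_add, reverse.map_mul, reverse_ι]
    noncomm_ring
  · rwa [prod_map_ι_mul_one_sub_mul_star_sub, algebraMap_eq_one_or_eq_neg_one_iff]

lemma InS.exists_eq_vahlenMatrix {M : Matrix (Fin 2) (Fin 2) (Cl p q)} (h : InS p q M) :
    ∃ (l : List (Fin (p + q) → ℝ)) (x : Fin (p + q) → ℝ),
      |listNorm (Qpq p q) l * (1 + Qpq p q x)| = 1 ∧
      (M = vahlenMatrix (l.map (ι (Qpq p q))).prod ((l.map (ι (Qpq p q))).prod * ι (Qpq p q) x) ∨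
       M = vahlenMatrix (l.map (ι (Qpq p q))).prod ((l.map (ι (Qpq p q))).prod * ι (Qpq p q) x)
         * vahlenMatrix 0 1) := by
  obtain ⟨_, _, ⟨lα, rfl⟩, ⟨lβ, rfl⟩, ⟨w, hw⟩, hdet, rfl⟩ := inS_iff.mp h
  have hnorm : |listNorm (Qpq p q) lα - listNorm (Qpq p q) lβ| = 1 := by
    rwa [prod_map_ι_mul_star, prod_map_ι_mul_star, ← map_sub,
      algebraMap_eq_one_or_eq_neg_one_iff] at hdet
  by_cases hα : listNorm (Qpq p q) lα = 0
  · have hβ : listNorm (Qpq p q) lβ ≠ 0 := by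
      rintro hβ
      simp [hα, hβ] at hnorm
    obtain ⟨x, hx⟩ := exists_eq_prod_map_ι_mul_ι (b := (lα.map (ι (Qpq p q))).prod) hβ
      (by rw [← reverse_ι, ← hw, reverse.map_mul, reverse_reverse])
    rw [hx] at hdet ⊢
    refine ⟨lβ, x, ?_, Or.inr (vahlenMatrix_mul_swap _ _).symm⟩
    rwa [← neg_sub, prod_map_ι_mul_star_sub, ← map_neg, algebraMap_eq_one_or_eq_neg_one_iff,
      abs_neg] at hdet
  · obtain ⟨x, hx⟩ := exists_eq_prod_map_ι_mul_ι hα hw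
    rw [hx] at hdet ⊢
    refine ⟨lα, x, ?_, Or.inl rfl⟩
    rwa [prod_map_ι_mul_star_sub, algebraMap_eq_one_or_eq_neg_one_iff] at hdet

lemma inS_vahlenMatrix_mul_vahlenMatrix {l k : List (Fin (p + q) → ℝ)} {x y : Fin (p + q) → ℝ}
    (hl : |listNorm (Qpq p q) l * (1 + Qpq p q x)| = 1)
    (hk : |listNorm (Qpq p q) k * (1 + Qpq p q y)| = 1) :
    InS p q (vahlenMatrix (l.map (ι (Qpq p q))).prod ((l.map (ι (Qpq p q))).prod * ι (Qpq p q) x)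
      * vahlenMatrix (k.map (ι (Qpq p q))).prod ((k.map (ι (Qpq p q))).prod * ι (Qpq p q) y)) := by
  have hk₀ : listNorm (Qpq p q) k ≠ 0 := by
    rintro h₀
    simp [h₀] at hk
  obtain ⟨u, hu, hQu⟩ := exists_ι_mul_involute_eq_mul_ι hk₀ x
  rw [vahlenMatrix_mul_vahlenMatrix_of_twist hu, ← List.prod_append, ← List.map_append]
  apply inS_vahlenMatrix_prod_mul_one_sub
  calc |listNorm (Qpq p q) (l ++ k) * ((1 + Qpq p q u) * (1 + Qpq p q y))|
      = |listNorm (Qpq p q) l * (1 + Qpq p q x)| * |listNorm (Qpq p q) k * (1 + Qpq p q y)| := by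
        rw [← abs_mul, listNorm_append, hQu]; ring_nf
    _ = 1 := by rw [hl, hk, one_mul]

theorem InS.mul {M N : Matrix (Fin 2) (Fin 2) (Cl p q)} (hM : InS p q M) (hN : InS p q N) :
    InS p q (M * N) := by
  obtain ⟨l, x, hl, rfl | rfl⟩ := hM.exists_eq_vahlenMatrix <;>
    obtain ⟨k, y, hk, rfl | rfl⟩ := hN.exists_eq_vahlenMatrix
  · exact inS_vahlenMatrix_mul_vahlenMatrix hl hk
  · rw [← mul_assoc]
    exact (inS_vahlenMatrix_mul_vahlenMatrix hl hk).mul_swap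
  all_goals
    have hk' : |listNorm (Qpq p q) (k.map Neg.neg) * (1 + Qpq p q (-y))| = 1 := by
      rwa [listNorm_map_neg, QuadraticMap.map_neg]
  · rw [mul_assoc, swap_mul_vahlenMatrix_prod_map_ι, ← mul_assoc]
    exact (inS_vahlenMatrix_mul_vahlenMatrix hl hk').mul_swap
  · rw [mul_assoc, ← mul_assoc (vahlenMatrix 0 1), swap_mul_vahlenMatrix_prod_map_ι, mul_assoc,
      swap_mul_swap, mul_one]
    exact inS_vahlenMatrix_mul_vahlenMatrix hl hk'

lemma inS_vahlenMatrix_smul_star {l : List (Fin (p + q) → ℝ)} {x : Fin (p + q) → ℝ}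
    (h : |listNorm (Qpq p q) l * (1 + Qpq p q x)| = 1) :
    InS p q (vahlenMatrix
      ((listNorm (Qpq p q) l * (1 + Qpq p q x)) • star (l.map (ι (Qpq p q))).prod)
      (-(listNorm (Qpq p q) l * (1 + Qpq p q x))
        • (ι (Qpq p q) x * reverse (l.map (ι (Qpq p q))).prod))) := by
  set σ := listNorm (Qpq p q) l * (1 + Qpq p q x)
  have hσ : σ * σ = 1 := by rw [← abs_mul_abs_self, h, one_mul]
  refine inS_iff.mpr ⟨_, _, ?_, ?_, ⟨-listNorm (Qpq p q) l • x, ?_⟩, ?_, rfl⟩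
  · rcases eq_or_ne l [] with rfl | hl
    · rcases eq_or_ne (Qpq p q x) 0 with hx | hx
      · simpa [σ, hx] using prod_mem_Tset (p := p) (q := q) []
      · exact smul_mem_Tset_of_ne_zero hx σ ⟨[], by simp⟩
    · rw [star_def, involute_prod_map_ι_eq_prod_map_neg, reverse_prod_map_ι, ← List.map_reverse]
      exact smul_prod_mem_Tset σ (by simpa using hl)
  · rw [reverse_prod_map_ι, ← List.map_reverse, ← List.prod_cons, ← List.map_cons]
    exact smul_prod_mem_Tset _ (List.cons_ne_nil _ _)
  · rw [map_smul, reverse.map_mul, reverse_reverse, reverse_ι, smul_mul_smul_comm, mul_neg, hσ,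
      ← mul_assoc, star_mul_prod_map_ι, ← Algebra.smul_def, map_smul, smul_smul, neg_one_mul]
  · rw [smul_star_prod_map_ι_mul_star_sub, hσ, one_mul, algebraMap_eq_one_or_eq_neg_one_iff]
    exact h

lemma exists_inverse_vahlenMatrix {l : List (Fin (p + q) → ℝ)} {x : Fin (p + q) → ℝ}
    (h : |listNorm (Qpq p q) l * (1 + Qpq p q x)| = 1) :
    ∃ N, InS p q N ∧
      vahlenMatrix (l.map (ι (Qpq p q))).prod ((l.map (ι (Qpq p q))).prod * ι (Qpq p q) x) * N = 1
      ∧ N * vahlenMatrix (l.map (ι (Qpq p q))).prod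
        ((l.map (ι (Qpq p q))).prod * ι (Qpq p q) x) = 1 := by
  have hσ : (listNorm (Qpq p q) l * (1 + Qpq p q x)) * (listNorm (Qpq p q) l * (1 + Qpq p q x))
      = 1 := by
    rw [← abs_mul_abs_self, h, one_mul]
  refine ⟨_, inS_vahlenMatrix_smul_star h, ?_, ?_⟩
  · rw [vahlenMatrix_mul_vahlenMatrix_smul_star (prod_map_ι_mul_star l), hσ, map_one,
      vahlenMatrix_one_zero]
  · rw [vahlenMatrix_smul_star_mul_vahlenMatrix (star_mul_prod_map_ι l), hσ, map_one,
      vahlenMatrix_one_zero]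

theorem InS.exists_inverse {M : Matrix (Fin 2) (Fin 2) (Cl p q)} (h : InS p q M) :
    ∃ N, InS p q N ∧ M * N = 1 ∧ N * M = 1 := by
  obtain ⟨l, x, hl, rfl | rfl⟩ := h.exists_eq_vahlenMatrix
  · exact exists_inverse_vahlenMatrix hl
  · obtain ⟨N, hN, hMN, hNM⟩ := exists_inverse_vahlenMatrix hl
    refine ⟨vahlenMatrix 0 1 * N, inS_swap.mul hN, ?_, ?_⟩
    · rw [mul_assoc, ← mul_assoc (vahlenMatrix 0 1), swap_mul_swap, one_mul, hMN]
    · rw [mul_assoc, ← mul_assoc N, hNM, one_mul, swap_mul_swap]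

end InS

theorem stmt13 (p q : ℕ) :
    (∀ M N, InS p q M → InS p q N → InS p q (M * N)) ∧
    InS p q 1 ∧
    (∀ M, InS p q M → ∃ N, InS p q N ∧ M * N = 1 ∧ N * M = 1) :=
  ⟨fun _ _ hM hN => hM.mul hN, inS_one, fun _ hM => hM.exists_inverse⟩
end
end

section
/- The group S_{pq} of normalized Vahlen matrices preserving the unit sphere acts transitively on B^{p,q} = R^{p,q} \ S^{p,q} via the Möbius action: for every x ∈ B^{p,q} there exists φ ∈ S_{pq} with φ(0) = x (namely φ_{(x,1)}). -/
noncomputable section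
open CliffordAlgebra

/-! Normalising `[[1, x], [x', 1]]` by the real scalar `l = |1 + Q(x)|^{-1/2}` gives
`α ᾱ - β β̄ = l² (1 + Q(x)) = ±1`, and `l` itself lies in `T(p,q)`: it is the product of four
copies of the vector `l^{1/4} e₀`, whose square is `±√l`. The Möbius image of `0` is
`β α⁻¹ = (l x) l⁻¹ = x`. -/

section

variable {p q : ℕ}

lemma Bpq_self_eq_neg_Qpq (x : Fin (p + q) → ℝ) : Bpq p q x x = -Qpq p q x := by
  simp [Bpq, Qpq, QuadraticMap.weightedSumSquares_apply, mul_assoc]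

lemma sw_sq (i : Fin (p + q)) : sw p q i ^ 2 = 1 := by
  unfold sw; split_ifs <;> norm_num

lemma Qpq_single (i : Fin (p + q)) (s : ℝ) : Qpq p q (Pi.single i s) = sw p q i * s ^ 2 := by
  rw [Qpq, QuadraticMap.weightedSumSquares_apply, Finset.sum_eq_single i]
  · simp [sq]
  · intro j _ hj
    simp [hj]
  · simp

lemma clConj_algebraMap (c : ℝ) : clConj (algebraMap ℝ (Cl p q) c) = algebraMap ℝ _ c := by
  rw [clConj, AlgHom.commutes, reverse.commutes]

lemma clConj_ι (v : Fin (p + q) → ℝ) : clConj (ι (Qpq p q) v) = -ι (Qpq p q) v := by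
  rw [clConj, involute_ι, map_neg, reverse_ι]

lemma algebraMap_mem_Tset (h : 0 < p + q) {c : ℝ} (hc : 0 ≤ c) :
    algebraMap ℝ (Cl p q) c ∈ Tset p q := by
  set v : Fin (p + q) → ℝ := Pi.single ⟨0, h⟩ (√√c)
  have hQv : Qpq p q v ^ 2 = c := by
    rw [Qpq_single, mul_pow, sw_sq, one_mul, Real.sq_sqrt (Real.sqrt_nonneg c),
      Real.sq_sqrt hc]
  refine ⟨List.replicate 4 v, ?_⟩
  rw [List.map_replicate, List.prod_replicate, show 4 = 2 * 2 from rfl, pow_mul, sq (ι _ v),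
    ι_sq_scalar, ← map_pow, hQv]

lemma exists_pos_sq_mul_eq_one_or_neg_one {t : ℝ} (ht : t ≠ 0) :
    ∃ l : ℝ, 0 < l ∧ (l ^ 2 * t = 1 ∨ l ^ 2 * t = -1) := by
  have habs : 0 < |t| := abs_pos.mpr ht
  refine ⟨(√|t|)⁻¹, inv_pos.mpr (Real.sqrt_pos.mpr habs), ?_⟩
  rw [inv_pow, Real.sq_sqrt habs.le, inv_mul_eq_div]
  rcases ht.lt_or_gt with hneg | hpos
  · right; rw [abs_of_neg hneg, div_neg, div_self ht]
  · left; rw [abs_of_pos hpos, div_self ht]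

lemma exists_normalizing_scalar {x : Fin (p + q) → ℝ} (hx : 1 + Qpq p q x ≠ 0) :
    ∃ l : ℝ, l ≠ 0 ∧ algebraMap ℝ (Cl p q) l ∈ Tset p q ∧
      (l ^ 2 * (1 + Qpq p q x) = 1 ∨ l ^ 2 * (1 + Qpq p q x) = -1) := by
  rcases (p + q).eq_zero_or_pos with h | h
  · have : IsEmpty (Fin (p + q)) := by rw [h]; infer_instance
    have hx0 : x = 0 := Subsingleton.elim _ _
    exact ⟨1, one_ne_zero, ⟨[], by simp⟩, Or.inl (by simp [hx0])⟩
  · obtain ⟨l, hl, hn⟩ := exists_pos_sq_mul_eq_one_or_neg_one hx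
    exact ⟨l, hl.ne', algebraMap_mem_Tset h hl.le, hn⟩

/-- The paper's `φ_{(x,1)}` before normalisation is `[[1, x], [x', 1]]`; here it is scaled by `l`. -/
def scaledMatrix (l : ℝ) (x : Fin (p + q) → ℝ) : Matrix (Fin 2) (Fin 2) (Cl p q) :=
  !![algebraMap ℝ _ l, ι (Qpq p q) (l • x);
    involute (ι (Qpq p q) (l • x)), involute (algebraMap ℝ _ l)]

lemma inS_scaledMatrix {l : ℝ} {x : Fin (p + q) → ℝ} (hl : algebraMap ℝ (Cl p q) l ∈ Tset p q)
    (hn : l ^ 2 * (1 + Qpq p q x) = 1 ∨ l ^ 2 * (1 + Qpq p q x) = -1) :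
    InS p q (scaledMatrix l x) := by
  have hnorm : algebraMap ℝ (Cl p q) l * clConj (algebraMap ℝ _ l) -
      ι (Qpq p q) (l • x) * clConj (ι (Qpq p q) (l • x)) =
        algebraMap ℝ _ (l ^ 2 * (1 + Qpq p q x)) := by
    rw [clConj_algebraMap, clConj_ι, mul_neg, sub_neg_eq_add, ι_sq_scalar,
      QuadraticMap.map_smul, ← map_mul, ← map_add, smul_eq_mul]
    ring_nf
  refine ⟨_, _, hl, ⟨[l • x], by simp⟩, ⟨l • l • x, ?_⟩, ?_, rfl⟩
  · rw [reverse_ι, ← Algebra.smul_def, ← map_smul]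
  · rw [hnorm]
    rcases hn with hn | hn <;> simp [hn]

lemma mobius_scaledMatrix_zero {l : ℝ} (hl : l ≠ 0) (x : Fin (p + q) → ℝ) :
    mobius (scaledMatrix l x) 0 = ι (Qpq p q) x := by
  have hunit : IsUnit (algebraMap ℝ (Cl p q) l) := (isUnit_iff_ne_zero.mpr hl).map _
  simp only [mobius, scaledMatrix, Matrix.of_apply, Matrix.cons_val', Matrix.cons_val_zero,
    Matrix.cons_val_one, Matrix.empty_val', Matrix.cons_val_fin_one, map_zero, mul_zero,
    zero_add, AlgHom.commutes]
  rw [map_smul, Algebra.smul_def, Algebra.commutes, Ring.mul_inverse_cancel_right _ _ hunit]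

end

theorem stmt19 (p q : ℕ) (x : Fin (p + q) → ℝ) (hx : Bpq p q x x ≠ 1) :
    ∃ M, InS p q M ∧ mobius M 0 = ι (Qpq p q) x := by
  have hx' : 1 + Qpq p q x ≠ 0 := by
    rw [Bpq_self_eq_neg_Qpq] at hx
    contrapose! hx
    linarith
  obtain ⟨l, hl, hT, hn⟩ := exists_normalizing_scalar hx'
  exact ⟨scaledMatrix l x, inS_scaledMatrix hT hn, mobius_scaledMatrix_zero hl x⟩
end
end
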